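/- arXiv:1501.02650 — 4 statements merged into one kernel-verified Lean document; each statement's English description precedes it below -/
import Mathlib

section
/- Let W = {x²y, xyx, yx², y²x, yxy, xy²}. If a commutative nil-variety of semigroups N satisfies an identity u = v where u is one of the words x²y or xy² and v is a word not in W, then N satisfies the identity x²y = 0. -/
/-!
Formalization framework: semigroup varieties as Galois-closed equational theories
over the free semigroup on countably many letters.  A variety is represented by
its equational theory; the order `V ≤ W` ("V is a subvariety of W") is reverse
inclusion of theories.  `Com` is the lattice of commutative semigroup varieties,
realized as the subtype of varieties whose theory contains the commutative law.
-/

open FreeSemigroup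

/-- Words: elements of the free semigroup over a countably infinite alphabet. -/
abbrev Word : Type := FreeSemigroup ℕ

/-- A semigroup identity `u = v`. -/
abbrev SgId : Type := Word × Word

/-- `spow a n = a ^ (n + 1)` in any (multiplicative) semigroup. -/
def spow {M : Type*} [Mul M] (a : M) : ℕ → M
  | 0 => a
  | n + 1 => a * spow a n

/-- A semigroup `S` satisfies the identity `e.1 = e.2`. -/
def SatS (S : Type) [Semigroup S] (e : SgId) : Prop :=
  ∀ σ : ℕ → S, FreeSemigroup.lift σ e.1 = FreeSemigroup.lift σ e.2

/-- `S` is a model of the set of identities `E`. -/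
def Models (S : Type) [Semigroup S] (E : Set SgId) : Prop :=
  ∀ e ∈ E, SatS S e

/-- The equational theory generated by `E`: all identities holding in every
model of `E` (by Birkhoff's theorem this is exactly deductive closure). -/
def eqTh (E : Set SgId) : Set SgId :=
  { e | ∀ (S : Type) [Semigroup S], Models S E → SatS S e }

theorem subset_eqTh (E : Set SgId) : E ⊆ eqTh E := by
  intro e he S _ hS
  exact hS e he

theorem eqTh_mono {E F : Set SgId} (h : E ⊆ F) : eqTh E ⊆ eqTh F := by
  intro e he S _ hS
  exact he S fun e' he' => hS e' (h he')

theorem eqTh_idem (E : Set SgId) : eqTh (eqTh E) = eqTh E := by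
  refine Set.Subset.antisymm ?_ (subset_eqTh _)
  intro e he S _ hS
  exact he S fun e' he' => he' S hS

/-- A semigroup variety, given by its (Galois-closed) equational theory. -/
structure SgVariety where
  th : Set SgId
  closed : eqTh th = th

theorem SgVariety.ext' {V W : SgVariety} (h : V.th = W.th) : V = W := by
  cases V; cases W; cases h; rfl

/-- The variety defined by a set of identities. -/
def varOf (E : Set SgId) : SgVariety :=
  ⟨eqTh E, eqTh_idem E⟩

/-- `V ≤ W` iff `V` is a subvariety of `W`, i.e. the theory of `W` is contained
in the theory of `V`. -/
instance : PartialOrder SgVariety where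
  le V W := W.th ⊆ V.th
  le_refl V := Set.Subset.refl _
  le_trans a b c h1 h2 := Set.Subset.trans h2 h1
  le_antisymm a b h1 h2 := SgVariety.ext' (Set.Subset.antisymm h2 h1)

/-- The lattice **SEM** of all semigroup varieties: join is intersection of
theories; meet is the variety defined by the union of the theories. -/
instance : Lattice SgVariety :=
  { (inferInstance : PartialOrder SgVariety) with
    sup := fun V W =>
      ⟨V.th ∩ W.th, by
        refine Set.Subset.antisymm (Set.subset_inter ?_ ?_) (subset_eqTh _)
        · exact (eqTh_mono Set.inter_subset_left).trans (le_of_eq V.closed)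
        · exact (eqTh_mono Set.inter_subset_right).trans (le_of_eq W.closed)⟩
    le_sup_left := fun V W => Set.inter_subset_left
    le_sup_right := fun V W => Set.inter_subset_right
    sup_le := fun V W U h1 h2 => Set.subset_inter h1 h2
    inf := fun V W => varOf (V.th ∪ W.th)
    inf_le_left := fun V W => Set.subset_union_left.trans (subset_eqTh _)
    inf_le_right := fun V W => Set.subset_union_right.trans (subset_eqTh _)
    le_inf := fun U V W h1 h2 =>
      (eqTh_mono (Set.union_subset h1 h2)).trans (le_of_eq U.closed) }

/-- The letters `x`, `y`, `z`. -/
def xw : Word := FreeSemigroup.of 0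
def yw : Word := FreeSemigroup.of 1
def zw : Word := FreeSemigroup.of 2

/-- The commutative law `xy = yx`. -/
def commId : SgId := (xw * yw, yw * xw)

/-- The lattice **Com**: commutative semigroup varieties. -/
abbrev ComVariety : Type := { V : SgVariety // commId ∈ V.th }

instance : Lattice ComVariety :=
  { (inferInstance : PartialOrder ComVariety) with
    sup := fun V W => ⟨V.1 ⊔ W.1, ⟨V.2, W.2⟩⟩
    le_sup_left := fun V W => @le_sup_left SgVariety _ V.1 W.1
    le_sup_right := fun V W => @le_sup_right SgVariety _ V.1 W.1
    sup_le := fun V W U h1 h2 => @sup_le SgVariety _ V.1 W.1 U.1 h1 h2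
    inf := fun V W => ⟨V.1 ⊓ W.1, subset_eqTh _ (Set.mem_union_left _ V.2)⟩
    inf_le_left := fun V W => @inf_le_left SgVariety _ V.1 W.1
    inf_le_right := fun V W => @inf_le_right SgVariety _ V.1 W.1
    le_inf := fun U V W h1 h2 => @le_inf SgVariety _ U.1 V.1 W.1 h1 h2 }

/-- The trivial variety `T`. -/
def trivialVar : SgVariety := varOf Set.univ

/-- The variety `COM` of all commutative semigroups. -/
def COMvar : SgVariety := varOf {commId}

/-- The variety `SL` of semilattices. -/
def SLvar : SgVariety := varOf {commId, (xw * xw, xw)}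

/-- `C_m = var{xᵐ = xᵐ⁺¹, xy = yx}` for `m ≥ 1`, and `C_0 = T`. -/
def Cvar : ℕ → SgVariety
  | 0 => trivialVar
  | m + 1 => varOf {commId, (spow xw m, spow xw (m + 1))}

def Tcom : ComVariety := ⟨trivialVar, subset_eqTh _ (Set.mem_univ _)⟩
def COMcom : ComVariety := ⟨COMvar, subset_eqTh _ rfl⟩
def SLcom : ComVariety := ⟨SLvar, subset_eqTh _ (Set.mem_insert _ _)⟩
def Ccom (m : ℕ) : ComVariety :=
  ⟨Cvar m, by
    cases m with
    | zero => exact subset_eqTh _ (Set.mem_univ _)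
    | succ m => exact subset_eqTh _ (Set.mem_insert _ _)⟩

/-- A semigroup (nonempty, with the given multiplication) is a group. -/
def IsGroupS (S : Type) [Semigroup S] : Prop :=
  ∃ e : S, (∀ a : S, e * a = a ∧ a * e = a) ∧ ∀ a : S, ∃ b : S, a * b = e ∧ b * a = e

/-- A nilsemigroup: there is a zero element and some power of every element is zero. -/
def IsNilS (S : Type) [Semigroup S] : Prop :=
  ∃ z : S, (∀ a : S, z * a = z ∧ a * z = z) ∧ ∀ a : S, ∃ n : ℕ, spow a n = z

/-- A group variety: all its (nonempty) members are groups. -/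
def IsGroupVariety (V : SgVariety) : Prop :=
  ∀ (S : Type) [Semigroup S], Nonempty S → Models S V.th → IsGroupS S

/-- A nil-variety: all its (nonempty) members are nilsemigroups. -/
def IsNilVariety (V : SgVariety) : Prop :=
  ∀ (S : Type) [Semigroup S], Nonempty S → Models S V.th → IsNilS S

/-- A combinatorial variety: all groups in it are singletons. -/
def IsCombinatorial (V : SgVariety) : Prop :=
  ∀ (S : Type) [Semigroup S], Models S V.th → IsGroupS S → Subsingleton S

/-- A periodic variety: satisfies `xⁿ = xⁿ⁺ᵏ` for some `n, k ≥ 1`. -/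
def IsPeriodic (V : SgVariety) : Prop :=
  ∃ n k : ℕ, (spow xw n, spow xw (n + k + 1)) ∈ V.th

/-- The letter `k` occurs in the word `w`. -/
def occursIn (k : ℕ) (w : Word) : Prop := k = w.head ∨ k ∈ w.tail

/-- `S` satisfies the identity `w = 0` (i.e. the system `wx = xw = w`, `x` fresh):
every value of `w` in `S` is a (two-sided) zero element. -/
def SatZeroS (S : Type) [Semigroup S] (w : Word) : Prop :=
  ∀ (σ : ℕ → S) (a : S),
    FreeSemigroup.lift σ w * a = FreeSemigroup.lift σ w ∧
      a * FreeSemigroup.lift σ w = FreeSemigroup.lift σ w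

/-- The variety `V` satisfies the identity `w = 0`. -/
def VSatZero (V : SgVariety) (w : Word) : Prop :=
  ∀ (S : Type) [Semigroup S], Models S V.th → SatZeroS S w

/-- The words `x²`, `x³`, `x²y`, `xy²`, `x²yz`. -/
def w_xx : Word := xw * xw
def w_xxx : Word := xw * xw * xw
def w_xxy : Word := xw * xw * yw
def w_xyy : Word := xw * yw * yw
def w_xxyz : Word := xw * xw * yw * zw

/-- The identity `x²y = xy²`. -/
def idQ : SgId := (w_xxy, w_xyy)

/-- The pair of identities expressing `w = 0`, with `k` a fresh letter. -/
def zeroPair (w : Word) (k : ℕ) : Set SgId :=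
  {(w * FreeSemigroup.of k, w), (FreeSemigroup.of k * w, w)}

/-- `xprodTo n = x₁x₂⋯xₙ` (for `n ≥ 1`), on the letters `0, …, n-1`. -/
def xprodTo : ℕ → Word
  | 0 => FreeSemigroup.of 0
  | 1 => FreeSemigroup.of 0
  | n + 2 => xprodTo (n + 1) * FreeSemigroup.of (n + 1)

/-- `I = var{x²y = xy², x²yz = 0, xy = yx}`. -/
def Ivar : SgVariety := varOf ({commId, idQ} ∪ zeroPair w_xxyz 3)

/-- `K = var{x²y = 0, xy = yx}`. -/
def Kvar : SgVariety := varOf ({commId} ∪ zeroPair w_xxy 2)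

/-- `L = var{x² = 0, xy = yx}`. -/
def Lvar : SgVariety := varOf ({commId} ∪ zeroPair w_xx 1)

/-- `I_n = var{x²yz = x₁⋯xₙ = 0, x²y = xy², xy = yx}`. -/
def Ivarn (n : ℕ) : SgVariety :=
  varOf ({commId, idQ} ∪ zeroPair w_xxyz 3 ∪ zeroPair (xprodTo n) n)

/-- `J = var{x²yz = x³ = 0, x²y = xy², xy = yx}`. -/
def Jvar : SgVariety := varOf ({commId, idQ} ∪ zeroPair w_xxyz 3 ∪ zeroPair w_xxx 1)

/-- `J_n = var{x²yz = x³ = x₁⋯xₙ = 0, x²y = xy², xy = yx}`. -/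
def Jvarn (n : ℕ) : SgVariety :=
  varOf ({commId, idQ} ∪ zeroPair w_xxyz 3 ∪ zeroPair w_xxx 1 ∪ zeroPair (xprodTo n) n)

/-- `K_n = var{x²y = x₁⋯xₙ = 0, xy = yx}`. -/
def Kvarn (n : ℕ) : SgVariety :=
  varOf ({commId} ∪ zeroPair w_xxy 2 ∪ zeroPair (xprodTo n) n)

/-- `L_n = var{x² = x₁⋯xₙ = 0, xy = yx}`. -/
def Lvarn (n : ℕ) : SgVariety :=
  varOf ({commId} ∪ zeroPair w_xx 1 ∪ zeroPair (xprodTo n) n)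

/-- Generators of `ZR(U)`: the commutative law together with all 0-reduced
identities (in the form of the corresponding identity pairs) holding in `U`. -/
def ZRgen (U : SgVariety) : Set SgId :=
  {commId} ∪ { e : SgId | ∃ (w : Word) (k : ℕ), ¬ occursIn k w ∧ VSatZero U w ∧
      (e = (w * FreeSemigroup.of k, w) ∨ e = (FreeSemigroup.of k * w, w)) }

/-- `ZR(U)`: the variety given by the commutative law and all 0-reduced
identities holding in `U`. -/
def ZRvar (U : SgVariety) : SgVariety := varOf (ZRgen U)

def Icom : ComVariety := ⟨Ivar, subset_eqTh _ (Set.mem_union_left _ (Set.mem_insert _ _))⟩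

def ZRcom (U : SgVariety) : ComVariety :=
  ⟨ZRvar U, subset_eqTh _ (Set.mem_union_left _ rfl)⟩

/-- All nilsemigroups in `V` are nilpotent of degree ≤ n, i.e. satisfy `x₁⋯xₙ = 0`. -/
def HasDegLe (V : SgVariety) (n : ℕ) : Prop :=
  ∀ (S : Type) [Semigroup S], Nonempty S → Models S V.th → IsNilS S → SatZeroS S (xprodTo n)

/-- `deg V = d` (with `d = ⊤` meaning infinite degree). -/
def DegIs (V : SgVariety) (d : ℕ∞) : Prop :=
  (∃ n : ℕ, 0 < n ∧ d = (n : ℕ∞) ∧ IsLeast {m : ℕ | 0 < m ∧ HasDegLe V m} n) ∨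
    (d = ⊤ ∧ ∀ n : ℕ, 0 < n → ¬ HasDegLe V n)

/-- Upper-modular element of a lattice. -/
def IsUpperModular {L : Type*} [Lattice L] (a : L) : Prop :=
  ∀ b c : L, b ≤ a → a ⊓ (b ⊔ c) = b ⊔ (a ⊓ c)

/-- Codistributive element of a lattice. -/
def IsCodistributive {L : Type*} [Lattice L] (a : L) : Prop :=
  ∀ b c : L, a ⊓ (b ⊔ c) = (a ⊓ b) ⊔ (a ⊓ c)

/-- Costandard element of a lattice. -/
def IsCostandard {L : Type*} [Lattice L] (a : L) : Prop :=
  ∀ b c : L, (a ⊓ b) ⊔ c = (a ⊔ c) ⊓ (b ⊔ c)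

/-- Modular element of a lattice. -/
def IsModularElt {L : Type*} [Lattice L] (a : L) : Prop :=
  ∀ b c : L, b ≤ c → (a ⊔ b) ⊓ c = (a ⊓ c) ⊔ b

/-- Neutral element of a lattice, via the median characterization
(equivalent to: every triple containing `a` generates a distributive
sublattice; Grätzer, "Lattice Theory: Foundation", Theorem 254). -/
def IsNeutralElt {L : Type*} [Lattice L] (a : L) : Prop :=
  ∀ b c : L, (a ⊓ b) ⊔ (b ⊓ c) ⊔ (c ⊓ a) = (a ⊔ b) ⊓ (b ⊔ c) ⊓ (c ⊔ a)

/-- The set `W = {x²y, xyx, yx², y²x, yxy, xy²}`. -/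
def Wset : Set Word :=
  {xw * xw * yw, xw * yw * xw, yw * xw * xw, yw * yw * xw, yw * xw * yw, xw * yw * yw}

/-!
Let `S` be a commutative nilsemigroup with zero `0` satisfying `u = v`; by the symmetry
`x ↔ y` we may assume `u = x²y`. If some letter occurs in only one of `u`, `v`, substituting
`0` for it shows `x²y = 0`. Otherwise `v` evaluates to `x^p y^q` with `p, q ≥ 1`, and `v ∉ W`
means exactly `p + q ≠ 3`. Adjoining an identity to `S` gives a commutative monoid with zero
whose nilpotent elements are those of `S`; there an equation `s = st` with `t` nilpotent forces
`s = stⁿ = 0`. For `p = q = 1` apply this to `xy = xy·x`; for `p + q ≥ 4` first to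
`x³ = x³·x^(p+q-3)`, after which `x²y = x^p y^q` vanishes unless `p = q = 2`, where
`x²y = x²y·y`.
-/

open Function

theorem eq_zero_of_eq_mul_of_isNilpotent {M : Type*} [MonoidWithZero M] {s t : M}
    (h : s = s * t) (ht : IsNilpotent t) : s = 0 := by
  obtain ⟨n, hn⟩ := ht
  have hpow : ∀ k : ℕ, s = s * t ^ k := by
    intro k
    induction k with
    | zero => rw [pow_zero, mul_one]
    | succ k ih => rw [pow_succ, ← mul_assoc, ← ih, ← h]
  rw [hpow n, hn, mul_zero]

theorem sq_mul_eq_zero_of_forall_sq_mul_eq {M : Type*} [CommMonoidWithZero M] {p q : ℕ}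
    (hp : p ≠ 0) (hq : q ≠ 0) (h3 : p + q ≠ 3)
    (h : ∀ a b : M, IsNilpotent a → IsNilpotent b → a ^ 2 * b = a ^ p * b ^ q)
    {a b : M} (ha : IsNilpotent a) (hb : IsNilpotent b) : a ^ 2 * b = 0 := by
  rcases (show (p = 1 ∧ q = 1) ∨ 4 ≤ p + q by omega) with ⟨rfl, rfl⟩ | h4
  · have hab : a * b = 0 := by
      refine eq_zero_of_eq_mul_of_isNilpotent ?_ ha
      calc a * b = a ^ 2 * b := by simpa only [pow_one] using (h a b ha hb).symm
        _ = a * b * a := by rw [pow_two, mul_assoc, mul_comm]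
    rw [pow_two, mul_assoc, hab, mul_zero]
  have hcube : ∀ c : M, IsNilpotent c → c ^ 3 = 0 := fun c hc =>
    eq_zero_of_eq_mul_of_isNilpotent (t := c ^ (p + q - 3))
      (by rw [← pow_add, Nat.add_sub_cancel' (by omega), pow_add, ← h c c hc hc, pow_succ])
      (hc.pow_of_pos (by omega))
  rcases (show 3 ≤ p ∨ 3 ≤ q ∨ (p = 2 ∧ q = 2) by omega) with hp3 | hq3 | ⟨rfl, rfl⟩
  · rw [h a b ha hb, ← Nat.add_sub_cancel' hp3, pow_add, hcube a ha, zero_mul, zero_mul]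
  · rw [h a b ha hb, ← Nat.add_sub_cancel' hq3, pow_add, hcube b hb, zero_mul, mul_zero]
  · exact eq_zero_of_eq_mul_of_isNilpotent ((h a b ha hb).trans (by rw [pow_two b, mul_assoc])) hb

namespace WithOne

variable {S : Type*}

theorem coe_spow [Semigroup S] (a : S) (n : ℕ) :
    ((spow a n : S) : WithOne S) = (a : WithOne S) ^ (n + 1) := by
  induction n with
  | zero => exact (pow_one _).symm
  | succ n ih => rw [spow, coe_mul, ih, ← pow_succ']

abbrev commMonoidWithZero [CommSemigroup S] {z : S} (hz : ∀ a : S, z * a = z ∧ a * z = z) :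
    CommMonoidWithZero (WithOne S) where
  zero := (z : WithOne S)
  zero_mul x := by
    induction x using WithOne.recOneCoe with
    | one => exact mul_one _
    | coe a => exact (coe_mul z a).symm.trans (congrArg _ (hz a).1)
  mul_zero x := by
    induction x using WithOne.recOneCoe with
    | one => exact one_mul _
    | coe a => exact (coe_mul a z).symm.trans (congrArg _ (hz a).2)

end WithOne

namespace FreeSemigroup

variable {α : Type*}

def toList (w : FreeSemigroup α) : List α := w.head :: w.tail

theorem toList_of (x : α) : (of x).toList = [x] := rfl

theorem toList_of_mul (x : α) (w : FreeSemigroup α) : (of x * w).toList = x :: w.toList := rfl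

theorem length_toList (w : FreeSemigroup α) : w.toList.length = w.length := rfl

section Semigroup

variable {S : Type*} [Semigroup S] (σ : α → S)

theorem coe_lift_eq_prod (w : FreeSemigroup α) :
    ((lift σ w : S) : WithOne S) = (w.toList.map fun k => (σ k : WithOne S)).prod := by
  induction w using FreeSemigroup.recOnMul with
  | ih1 x => simp [toList_of]
  | ih2 x w _ ih => rw [lift_of_mul, WithOne.coe_mul, ih, toList_of_mul, List.map_cons,
      List.prod_cons]

theorem lift_eq_of_mem_toList {z : S} (hz : ∀ a : S, z * a = z ∧ a * z = z) {k : α}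
    {w : FreeSemigroup α} (hk : k ∈ w.toList) (hσ : σ k = z) : lift σ w = z := by
  induction w using FreeSemigroup.recOnMul with
  | ih1 x =>
    rw [toList_of, List.mem_singleton] at hk
    rw [lift_of, ← hk, hσ]
  | ih2 x w _ ih =>
    rw [toList_of_mul, List.mem_cons] at hk
    rw [lift_of_mul]
    rcases hk with rfl | hk
    · rw [hσ, (hz _).1]
    · rw [ih hk, (hz _).2]

theorem lift_update_of_not_mem_toList [DecidableEq α] {k : α} {w : FreeSemigroup α}
    (hk : k ∉ w.toList) (a : S) : lift (update σ k a) w = lift σ w := by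
  induction w using FreeSemigroup.recOnMul with
  | ih1 x =>
    rw [toList_of, List.mem_singleton] at hk
    simp [update_of_ne (Ne.symm hk)]
  | ih2 x w _ ih =>
    rw [toList_of_mul, List.mem_cons, not_or] at hk
    rw [lift_of_mul, lift_of_mul, ih hk.2, update_of_ne (Ne.symm hk.1)]

theorem lift_map {β : Type*} (f : β → α) (w : FreeSemigroup β) :
    lift σ (map f w) = lift (σ ∘ f) w := by
  induction w using FreeSemigroup.recOnMul with
  | ih1 x => rfl
  | ih2 x w _ ih => rw [map_mul, map_of, lift_of_mul, lift_of_mul, ih, comp_apply]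

end Semigroup

variable [DecidableEq α] {w : FreeSemigroup α} {i j : α}

theorem coe_lift_eq_pow_mul_pow {S : Type*} [CommSemigroup S] (hw : w.toList.toFinset = {i, j})
    (hij : i ≠ j) (σ : α → S) :
    ((lift σ w : S) : WithOne S) =
      (σ i : WithOne S) ^ w.toList.count i * (σ j : WithOne S) ^ w.toList.count j := by
  rw [coe_lift_eq_prod, Finset.prod_list_map_count, hw, Finset.prod_pair hij]

theorem count_add_count_eq_length (hw : w.toList.toFinset = {i, j}) (hij : i ≠ j) :
    w.toList.count i + w.toList.count j = w.length := by
  rw [← length_toList, ← List.sum_toFinset_count_eq_length, hw, Finset.sum_pair hij]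

end FreeSemigroup

open FreeSemigroup

theorem SatS.lift_eq_of_toFinset_ne {S : Type} [Semigroup S] {u v : Word} (h : SatS S (u, v))
    {z : S} (hz : ∀ a : S, z * a = z ∧ a * z = z)
    (hne : u.toList.toFinset ≠ v.toList.toFinset) (σ : ℕ → S) : lift σ u = z := by
  obtain ⟨k, hk⟩ : ∃ k, ¬(k ∈ u.toList ↔ k ∈ v.toList) := by
    simpa [Finset.ext_iff] using hne
  by_cases hku : k ∈ u.toList
  · have hkv : k ∉ v.toList := by tauto
    calc lift σ u = lift σ v := h σ
      _ = lift (update σ k z) v := (lift_update_of_not_mem_toList σ hkv z).symm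
      _ = lift (update σ k z) u := (h _).symm
      _ = z := lift_eq_of_mem_toList _ hz hku (update_self ..)
  · have hkv : k ∈ v.toList := by tauto
    calc lift σ u = lift (update σ k z) u := (lift_update_of_not_mem_toList σ hku z).symm
      _ = lift (update σ k z) v := h _
      _ = z := lift_eq_of_mem_toList _ hz hkv (update_self ..)

theorem mem_Wset_of_toFinset_eq_of_length_eq {v : Word} (hv : v.toList.toFinset = {0, 1})
    (hlen : v.length = 3) : v ∈ Wset := by
  obtain ⟨a, t⟩ := v
  obtain ⟨b, c, rfl⟩ := List.length_eq_two.mp (Nat.succ.inj hlen)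
  have hletters : ∀ k ∈ [a, b, c], k = 0 ∨ k = 1 := by
    intro k hk
    simpa using (Finset.ext_iff.mp hv k).mp (List.mem_toFinset.mpr hk)
  simp only [List.forall_mem_cons] at hletters
  simp only [Wset, Set.mem_insert_iff, Set.mem_singleton_iff]
  obtain ⟨ha | ha, hb | hb, hc | hc, -⟩ := hletters <;> subst ha hb hc <;> first
    | decide
    | exact absurd hv (by decide)

theorem map_swap_not_mem_Wset {v : Word} (hv : v ∉ Wset) : map (Equiv.swap 0 1) v ∉ Wset := by
  intro hmem
  apply hv
  have hinv : (map (Equiv.swap 0 1)).comp (map (Equiv.swap 0 1)) = MulHom.id Word :=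
    hom_ext (funext fun k => by simp)
  rw [← MulHom.id_apply (M := Word) v, ← hinv, MulHom.comp_apply]
  simp only [Wset, Set.mem_insert_iff, Set.mem_singleton_iff] at hmem ⊢
  rcases hmem with h | h | h | h | h | h <;> rw [h] <;> decide

theorem mul_comm_of_satS_commId {S : Type} [Semigroup S] (h : SatS S commId) (a b : S) :
    a * b = b * a :=
  h fun k => if k = 0 then a else b

theorem SatS.w_xxy_of_w_xyy {S : Type} [CommSemigroup S] {v : Word} (h : SatS S (w_xyy, v)) :
    SatS S (w_xxy, map (Equiv.swap 0 1) v) := fun σ =>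
  calc lift σ w_xxy = lift (σ ∘ Equiv.swap 0 1) w_xyy := by
        simp [w_xxy, w_xyy, xw, yw, mul_comm, mul_assoc]
    _ = lift (σ ∘ Equiv.swap 0 1) v := h _
    _ = lift σ (map (Equiv.swap 0 1) v) := (lift_map σ _ v).symm

theorem sq_mul_eq_zero_of_satS_w_xxy {S : Type} [CommSemigroup S] {z : S}
    (hz : ∀ a : S, z * a = z ∧ a * z = z) (hnil : ∀ a : S, ∃ n, spow a n = z) {v : Word}
    (h : SatS S (w_xxy, v)) (hv : v.toList.toFinset = {0, 1}) (hlen : v.length ≠ 3)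
    (a b : S) : a * a * b = z := by
  let _ := WithOne.commMonoidWithZero hz
  have hnilp : ∀ x : WithOne S, IsNilpotent x ↔ x ≠ 1 := by
    refine fun x => ⟨?_, fun hx => ?_⟩
    · rintro ⟨n, hn⟩ rfl
      exact WithOne.one_ne_coe ((one_pow n).symm.trans hn)
    · obtain ⟨c, rfl⟩ := WithOne.ne_one_iff_exists.mp hx
      obtain ⟨n, hn⟩ := hnil c
      exact ⟨n + 1, by rw [← WithOne.coe_spow, hn]; rfl⟩
  have hcount : ∀ k ∈ ({0, 1} : Finset ℕ), v.toList.count k ≠ 0 := fun k hk =>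
    (List.count_pos_iff.mpr (List.mem_toFinset.mp (hv ▸ hk))).ne'
  have hlaw : ∀ x y : WithOne S, IsNilpotent x → IsNilpotent y →
      x ^ 2 * y = x ^ v.toList.count 0 * y ^ v.toList.count 1 := by
    intro x y hx hy
    obtain ⟨c, rfl⟩ := WithOne.ne_one_iff_exists.mp ((hnilp x).mp hx)
    obtain ⟨d, rfl⟩ := WithOne.ne_one_iff_exists.mp ((hnilp y).mp hy)
    have hcd := congrArg ((↑) : S → WithOne S) (h fun k => if k = 0 then c else d)
    rw [coe_lift_eq_pow_mul_pow hv zero_ne_one] at hcd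
    simpa [w_xxy, xw, yw, pow_two] using hcd
  have hsq := sq_mul_eq_zero_of_forall_sq_mul_eq (hcount 0 (by simp)) (hcount 1 (by simp))
    (by rwa [count_add_count_eq_length hv zero_ne_one]) hlaw
    ((hnilp a).mpr WithOne.coe_ne_one) ((hnilp b).mpr WithOne.coe_ne_one)
  exact WithOne.coe_injective (by rw [WithOne.coe_mul, WithOne.coe_mul, ← pow_two]; exact hsq)

/-- Corollary `xxy=w` of the paper.  If a commutative
nil-variety `N` satisfies an identity `u = v` with `u ∈ {x²y, xy²}` and
`v ∉ W`, then `N` satisfies `x²y = 0`. -/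
theorem satisfies_xxy_eq_zero (N : ComVariety) (hN : IsNilVariety N.1)
    (u v : Word) (hu : u = w_xxy ∨ u = w_xyy) (hv : v ∉ Wset)
    (huv : (u, v) ∈ N.1.th) :
    VSatZero N.1 w_xxy := by
  intro S _ hS σ c
  let _ : CommSemigroup S := { mul_comm := mul_comm_of_satS_commId (hS _ N.2) }
  obtain ⟨z, hz, hnil⟩ := hN S ⟨c⟩ hS
  obtain ⟨v', hv', hsat⟩ : ∃ v' ∉ Wset, SatS S (w_xxy, v') := by
    rcases hu with rfl | rfl
    · exact ⟨v, hv, hS _ huv⟩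
    · exact ⟨_, map_swap_not_mem_Wset hv, SatS.w_xxy_of_w_xyy (hS _ huv)⟩
  have hxxy : ∀ a b : S, a * a * b = z := by
    by_cases hletters : v'.toList.toFinset = {0, 1}
    · exact sq_mul_eq_zero_of_satS_w_xxy hz hnil hsat hletters
        fun hlen => hv' (mem_Wset_of_toFinset_eq_of_length_eq hletters hlen)
    · intro a b
      have hxxy_letters : w_xxy.toList.toFinset = {0, 1} := by decide
      exact hsat.lift_eq_of_toFinset_ne hz (hxxy_letters ▸ Ne.symm hletters)
        fun k => if k = 0 then a else b
  rw [show lift σ w_xxy = z from hxxy (σ 0) (σ 1)]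
  exact hz c
end

section
/- If a commutative nil-variety of semigroups N satisfies the identity x²y = xy², then N also satisfies the identity x²yz = 0. -/
/-!
Formalization framework: semigroup varieties as Galois-closed equational theories
over the free semigroup on countably many letters.  A variety is represented by
its equational theory; the order `V ≤ W` ("V is a subvariety of W") is reverse
inclusion of theories.  `Com` is the lattice of commutative semigroup varieties,
realized as the subtype of varieties whose theory contains the commutative law.
-/

open FreeSemigroup

/-- If a commutative nil-variety `N` satisfies `x²y = xy²`,
then it satisfies `x²yz = 0`. -/
theorem xxy_eq_xyy_implies_xxyz_eq_zero (N : ComVariety) (hN : IsNilVariety N.1)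
    (h : idQ ∈ N.1.th) :
    VSatZero N.1 w_xxyz := by
  intro S _ hS σ a
  have hc : ∀ p q : S, p * q = q * p := by
    intro p q
    have := hS commId N.2 (fun n => if n = 0 then p else q)
    simpa [commId, xw, yw] using this
  letI : CommSemigroup S := { mul_comm := hc }
  have hq : ∀ p q : S, p * p * q = p * q * q := by
    intro p q
    have := hS idQ h (fun n => if n = 0 then p else q)
    simpa [idQ, w_xxy, w_xyy, xw, yw] using this
  obtain ⟨z, hz, hnil⟩ := hN S ⟨a⟩ hS
  have key : ∀ p q u : S, p * p * q * u * u = p * p * q * u := by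
    intro p q u
    have h1 : p * p * (q * u) = p * (q * u) * (q * u) := hq p (q * u)
    have h2 : p * (q * u) * (q * u) = p * q * q * (u * u) := by ac_rfl
    calc p * p * q * u * u = p * p * q * (u * u) := mul_assoc _ _ _
      _ = p * q * q * (u * u) := by rw [hq p q]
      _ = p * (q * u) * (q * u) := h2.symm
      _ = p * p * (q * u) := h1.symm
      _ = p * p * q * u := (mul_assoc _ _ _).symm
  have pw : ∀ (t u : S), t * u = t → ∀ m, t * spow u m = t := by
    intro t u htu m
    induction m with
    | zero => exact htu
    | succ m ih =>
      calc t * spow u (m + 1) = t * (u * spow u m) := rfl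
        _ = t * u * spow u m := (mul_assoc _ _ _).symm
        _ = t * spow u m := by rw [htu]
        _ = t := ih
  obtain ⟨n, hn⟩ := hnil (σ 2)
  have hw : FreeSemigroup.lift σ w_xxyz = σ 0 * σ 0 * σ 1 * σ 2 := by
    simp [w_xxyz, xw, yw, zw]
  have ht : σ 0 * σ 0 * σ 1 * σ 2 = z := by
    have := pw (σ 0 * σ 0 * σ 1 * σ 2) (σ 2) (key _ _ _) n
    rw [hn] at this
    rw [← this, (hz _).2]
  rw [hw, ht]
  exact ⟨(hz a).1, (hz a).2⟩
end

section
/- If X and Y are commutative semigroup varieties, then deg(X ∨ Y) = max{deg(X), deg(Y)} (with the convention that the maximum is ∞ if either degree is ∞). -/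
/-!
Formalization framework: semigroup varieties as Galois-closed equational theories
over the free semigroup on countably many letters.  A variety is represented by
its equational theory; the order `V ≤ W` ("V is a subvariety of W") is reverse
inclusion of theories.  `Com` is the lattice of commutative semigroup varieties,
realized as the subtype of varieties whose theory contains the commutative law.
-/

open FreeSemigroup

section Aux
open FreeSemigroup

variable {S : Type} [Semigroup S]

/-- letters of a word as a list -/
def toL (u : Word) : List ℕ := u.head :: u.tail

lemma toL_of (k : ℕ) : toL (of k) = [k] := rfl

lemma toL_mul (u v : Word) : toL (u * v) = toL u ++ toL v := rfl

lemma length_toL (u : Word) : (toL u).length = u.length := by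
  simp [toL, FreeSemigroup.length, Nat.add_comm]

lemma lift_lift (σ : ℕ → Word) (τ : ℕ → S) (u : Word) :
    lift τ (lift σ u) = lift (fun k => lift τ (σ k)) u := by
  induction u using FreeSemigroup.recOnMul with
  | ih1 k => simp
  | ih2 x y _ ih => simp [map_mul, *]

lemma lift_congr {σ τ : ℕ → S} {u : Word} (h : ∀ k ∈ toL u, σ k = τ k) :
    lift σ u = lift τ u := by
  induction u using FreeSemigroup.recOnMul with
  | ih1 k => simpa using h k (by simp [toL_of])
  | ih2 x y _ ih =>
      rw [map_mul, map_mul]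
      have h1 : σ x = τ x := h x (by simp [toL_mul, toL_of])
      have h2 := ih (fun k hk => h k (by simp [toL_mul]; tauto))
      simp [h1, h2]

lemma lift_spow (σ : ℕ → S) (u : Word) (k : ℕ) :
    lift σ (spow u k) = spow (lift σ u) k := by
  induction k with
  | zero => rfl
  | succ k ih => simp [spow, map_mul, ih]

lemma coe_lift (σ : ℕ → S) (u : Word) :
    ((lift σ u : S) : WithOne S) = ((toL u).map (fun k => ((σ k : S) : WithOne S))).prod := by
  induction u using FreeSemigroup.recOnMul with
  | ih1 k => simp [toL_of]
  | ih2 x y _ ih => simp [map_mul, WithOne.coe_mul, toL_mul, toL_of, ih]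

lemma coe_spow (a : S) (k : ℕ) :
    ((spow a k : S) : WithOne S) = (a : WithOne S) ^ (k + 1) := by
  induction k with
  | zero => simp [spow]
  | succ k ih =>
      show ((a * spow a k : S) : WithOne S) = _
      rw [WithOne.coe_mul, ih, ← pow_succ']

lemma toL_xprodTo : ∀ n : ℕ, toL (xprodTo (n + 1)) = List.range (n + 1)
  | 0 => rfl
  | n + 1 => by
      rw [show xprodTo (n + 2) = xprodTo (n + 1) * FreeSemigroup.of (n + 1) from rfl,
        toL_mul, toL_xprodTo n, toL_of]
      simp [List.range_succ]

lemma length_xprodTo (n : ℕ) : (xprodTo (n + 1)).length = n + 1 := by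
  rw [← length_toL, toL_xprodTo, List.length_range]

lemma le_length_spow (u : Word) (k : ℕ) : k + 1 ≤ (spow u k).length := by
  have h1 : ∀ w : Word, 1 ≤ w.length := fun w => Nat.le_add_left 1 w.tail.length
  induction k with
  | zero => exact h1 u
  | succ k ih =>
      show k + 2 ≤ (u * spow u k).length
      rw [FreeSemigroup.length_mul]
      have := h1 u
      omega

end Aux

lemma lift_of_id (u : Word) : FreeSemigroup.lift FreeSemigroup.of u = u := by
  induction u using FreeSemigroup.recOnMul with
  | ih1 k => simp
  | ih2 x y _ ih => rw [map_mul, ih, FreeSemigroup.lift_of]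
section Th
open FreeSemigroup

lemma mem_th_iff (V : SgVariety) (e : SgId) :
    e ∈ V.th ↔ ∀ (S : Type) [Semigroup S], Models S V.th → SatS S e := by
  conv_lhs => rw [← V.closed]
  rfl

lemma th_refl (V : SgVariety) (u : Word) : (u, u) ∈ V.th :=
  (mem_th_iff V _).2 fun _ _ _ _ => rfl

lemma th_symm (V : SgVariety) {u v : Word} (h : (u, v) ∈ V.th) : (v, u) ∈ V.th := by
  rw [mem_th_iff] at h ⊢
  exact fun S _ hM σ => (h S hM σ).symm

lemma th_trans (V : SgVariety) {u v w : Word} (h1 : (u, v) ∈ V.th) (h2 : (v, w) ∈ V.th) :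
    (u, w) ∈ V.th := by
  rw [mem_th_iff] at h1 h2 ⊢
  exact fun S _ hM σ => (h1 S hM σ).trans (h2 S hM σ)

lemma th_mul (V : SgVariety) {u v u' v' : Word} (h1 : (u, v) ∈ V.th) (h2 : (u', v') ∈ V.th) :
    (u * u', v * v') ∈ V.th := by
  rw [mem_th_iff] at h1 h2 ⊢
  intro S _ hM σ
  simp only [map_mul]
  rw [h1 S hM σ, h2 S hM σ]

lemma th_subst (V : SgVariety) {u v : Word} (σ : ℕ → Word) (h : (u, v) ∈ V.th) :
    (lift σ u, lift σ v) ∈ V.th := by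
  rw [mem_th_iff] at h ⊢
  intro S _ hM τ
  rw [lift_lift, lift_lift]
  exact h S hM _

lemma comm_of_models {S : Type} [Semigroup S] {V : SgVariety} (hc : commId ∈ V.th)
    (hM : Models S V.th) : ∀ a b : S, a * b = b * a := by
  intro a b
  have := hM _ hc (fun k => if k = 0 then a else b)
  simpa [commId, xw, yw, map_mul] using this

end Th
section Quot
open FreeSemigroup

variable (V : SgVariety) (n : ℕ)

/-- words equivalent (in `V`) to a word of length `> n` -/
def ZSet : Set Word := { u | ∃ v, (u, v) ∈ V.th ∧ n < v.length }

lemma ZSet_sat {u v : Word} (h : (u, v) ∈ V.th) (hv : v ∈ ZSet V n) : u ∈ ZSet V n := by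
  obtain ⟨w, hw, hl⟩ := hv
  exact ⟨w, th_trans V h hw, hl⟩

lemma ZSet_mul_left {u : Word} (hu : u ∈ ZSet V n) (w : Word) : u * w ∈ ZSet V n := by
  obtain ⟨v, hv, hl⟩ := hu
  exact ⟨v * w, th_mul V hv (th_refl V w), by simp; omega⟩

lemma ZSet_mul_right {u : Word} (hu : u ∈ ZSet V n) (w : Word) : w * u ∈ ZSet V n := by
  obtain ⟨v, hv, hl⟩ := hu
  exact ⟨w * v, th_mul V (th_refl V w) hv, by simp; omega⟩

lemma ZSet_of_long {u : Word} (hu : n < u.length) : u ∈ ZSet V n := ⟨u, th_refl V u, hu⟩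

/-- the congruence: theory-equality, with everything in `ZSet` collapsed -/
def qrel (u v : Word) : Prop := (u, v) ∈ V.th ∨ (u ∈ ZSet V n ∧ v ∈ ZSet V n)

lemma qrel_equiv : Equivalence (qrel V n) where
  refl u := Or.inl (th_refl V u)
  symm h := by
    rcases h with h | h
    · exact Or.inl (th_symm V h)
    · exact Or.inr ⟨h.2, h.1⟩
  trans {u v w} h1 h2 := by
    rcases h1 with h1 | h1 <;> rcases h2 with h2 | h2
    · exact Or.inl (th_trans V h1 h2)
    · exact Or.inr ⟨ZSet_sat V n h1 h2.1, h2.2⟩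
    · exact Or.inr ⟨h1.1, ZSet_sat V n (th_symm V h2) h1.2⟩
    · exact Or.inr ⟨h1.1, h2.2⟩

/-- the setoid -/
def qsetoid : Setoid Word := ⟨qrel V n, qrel_equiv V n⟩

/-- the quotient semigroup -/
abbrev QS : Type := Quotient (qsetoid V n)

lemma qrel_mul {u v u' v' : Word} (h1 : qrel V n u u') (h2 : qrel V n v v') :
    qrel V n (u * v) (u' * v') := by
  rcases h1 with h1 | h1
  · rcases h2 with h2 | h2
    · exact Or.inl (th_mul V h1 h2)
    · exact Or.inr ⟨ZSet_mul_right V n h2.1 u, ZSet_mul_right V n h2.2 u'⟩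
  · exact Or.inr ⟨ZSet_mul_left V n h1.1 v, ZSet_mul_left V n h1.2 v'⟩

instance : Semigroup (QS V n) where
  mul := Quotient.map₂ (· * ·) (fun _ _ h1 _ _ h2 => qrel_mul V n h1 h2)
  mul_assoc a b c := by
    refine Quotient.inductionOn₃ a b c (fun u v w => ?_)
    show Quotient.mk (qsetoid V n) (u * v * w) = Quotient.mk (qsetoid V n) (u * (v * w))
    rw [mul_assoc]

lemma QS_mk_mul (u v : Word) :
    (Quotient.mk (qsetoid V n) u) * (Quotient.mk (qsetoid V n) v) =
      Quotient.mk (qsetoid V n) (u * v) := rfl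

lemma QS_lift (σ : ℕ → QS V n) (σ' : ℕ → Word) (hσ : ∀ k, σ k = Quotient.mk _ (σ' k))
    (u : Word) : lift σ u = Quotient.mk (qsetoid V n) (lift σ' u) := by
  induction u using FreeSemigroup.recOnMul with
  | ih1 k => simpa using hσ k
  | ih2 x y _ ih =>
      rw [map_mul, map_mul, ih, FreeSemigroup.lift_of, FreeSemigroup.lift_of, hσ x, QS_mk_mul]

lemma QS_models : Models (QS V n) V.th := by
  intro e he σ
  have h1 := QS_lift V n σ (fun k => (σ k).out) (fun k => (Quotient.out_eq _).symm) e.1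
  have h2 := QS_lift V n σ (fun k => (σ k).out) (fun k => (Quotient.out_eq _).symm) e.2
  rw [h1, h2]
  exact Quotient.sound (Or.inl (th_subst V _ he))

lemma QS_spow (u : Word) (k : ℕ) :
    spow (Quotient.mk (qsetoid V n) u) k = Quotient.mk (qsetoid V n) (spow u k) := by
  induction k with
  | zero => rfl
  | succ k ih => show _ * _ = _; rw [ih, QS_mk_mul]; rfl

lemma QS_nil : IsNilS (QS V n) := by
  refine ⟨Quotient.mk _ (spow (FreeSemigroup.of 0) n), ?_, ?_⟩
  · have hz : spow (FreeSemigroup.of 0) n ∈ ZSet V n :=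
      ZSet_of_long V n (by have := le_length_spow (FreeSemigroup.of 0) n; omega)
    intro a
    refine Quotient.inductionOn a (fun u => ?_)
    constructor
    · exact Quotient.sound (Or.inr ⟨ZSet_mul_left V n hz u, hz⟩)
    · exact Quotient.sound (Or.inr ⟨ZSet_mul_right V n hz u, hz⟩)
  · intro a
    refine Quotient.inductionOn a (fun u => ?_)
    refine ⟨n, ?_⟩
    rw [QS_spow]
    refine Quotient.sound (Or.inr ⟨?_, ?_⟩)
    · exact ZSet_of_long V n (by have := le_length_spow u n; omega)
    · exact ZSet_of_long V n (by have := le_length_spow (FreeSemigroup.of 0) n; omega)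

/-- Lemma D: a variety of degree ≤ n has an identity making `x₁⋯xₙ` long. -/
theorem exists_long (hn : 1 ≤ n) (hdeg : HasDegLe V n) :
    ∃ v : Word, (xprodTo n, v) ∈ V.th ∧ n < v.length := by
  obtain ⟨m, rfl⟩ : ∃ m, n = m + 1 := ⟨n - 1, by omega⟩
  have hsat := hdeg (QS V (m + 1)) ⟨Quotient.mk _ (FreeSemigroup.of 0)⟩
      (QS_models V (m + 1)) (QS_nil V (m + 1))
  have h := (hsat (fun k => Quotient.mk _ (FreeSemigroup.of k))
      (Quotient.mk _ (FreeSemigroup.of (m + 1)))).1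
  rw [QS_lift V (m+1) _ FreeSemigroup.of (fun k => rfl), QS_mk_mul, lift_of_id] at h
  have h' := Quotient.exact h
  rcases h' with h' | h'
  · refine ⟨xprodTo (m + 1) * FreeSemigroup.of (m + 1), th_symm V h', ?_⟩
    rw [FreeSemigroup.length_mul, length_xprodTo]
    simp
  · obtain ⟨v, hv, hl⟩ := h'.2
    exact ⟨v, hv, hl⟩

end Quot
section LemA
open FreeSemigroup Finset

lemma list_prod_range {M : Type*} [CommMonoid M] (g : ℕ → M) (t : ℕ) :
    ((List.range t).map g).prod = ∏ j ∈ Finset.range t, g j := by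
  induction t with
  | zero => simp
  | succ t ih =>
      rw [List.range_succ, List.map_append, List.prod_append, Finset.prod_range_succ, ih]
      simp

variable {S : Type} [CommSemigroup S]

lemma coe_lift_xprod (σ : ℕ → S) (m : ℕ) :
    ((lift σ (xprodTo (m + 1)) : S) : WithOne S) =
      ∏ j ∈ Finset.range (m + 1), ((σ j : S) : WithOne S) := by
  rw [coe_lift, toL_xprodTo, list_prod_range]

lemma coe_lift_count (σ : ℕ → S) (v : Word) :
    ((lift σ v : S) : WithOne S) =
      ∏ k ∈ (toL v).toFinset, ((σ k : S) : WithOne S) ^ (toL v).count k := by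
  rw [coe_lift, Finset.prod_list_map_count]

lemma chain_mul {M : Type*} [CommMonoid M] (a : M) {ι : Type*} [Fintype ι] (Q : ι → M)
    (h : ∀ r : ι, a = a * Q r) : a = a * ∏ r, Q r := by
  classical
  have key : ∀ s : Finset ι, a = a * ∏ r ∈ s, Q r := by
    intro s
    induction s using Finset.induction_on with
    | empty => simp
    | @insert x s hx ih =>
        conv_rhs => rw [Finset.prod_insert hx, ← mul_assoc, ← h x]
        exact ih
  exact key univ

theorem exists_spow (V : SgVariety) (hcm : commId ∈ V.th) {n : ℕ} (hn : 1 ≤ n) {v : Word}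
    (hv : (xprodTo n, v) ∈ V.th) (hlen : n < v.length) :
    ∃ c : ℕ, 1 ≤ c ∧ (xprodTo n, spow (xprodTo n) c) ∈ V.th := by
  classical
  obtain ⟨m, rfl⟩ : ∃ m, n = m + 1 := ⟨n - 1, by omega⟩
  set w : Word := xprodTo (m + 1) with hw
  set ℓ : List ℕ := toL v with hℓ
  set F : Finset ℕ := ℓ.toFinset with hF
  by_cases hcase : ∀ j < m + 1, j ∈ F
  · -- every letter occurs in v
    set ρ : ℕ → Fin (m + 1) := fun k => ⟨k % (m + 1), Nat.mod_lt _ (Nat.succ_pos m)⟩ with hρ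
    set eh : Fin (m + 1) → ℕ := fun i => ∑ k ∈ F.filter (fun k => ρ k = i), ℓ.count k with heh
    set c : ℕ := ∑ i : Fin (m + 1), (eh i - 1) with hc
    have hρval : ∀ i : Fin (m + 1), ρ i.val = i := by
      intro i; apply Fin.ext; simp [hρ, Nat.mod_eq_of_lt i.isLt]
    have hsum : ∑ i : Fin (m + 1), eh i = ℓ.length := by
      rw [heh, Finset.sum_fiberwise_of_maps_to (fun k _ => Finset.mem_univ (ρ k)) ℓ.count]
      have h2 := Multiset.toFinset_sum_count_eq (↑ℓ : Multiset ℕ)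
      simpa [hF] using h2
    have hone : ∀ i : Fin (m + 1), 1 ≤ eh i := by
      intro i
      have hmem : (i : ℕ) ∈ F.filter (fun k => ρ k = i) := by
        rw [Finset.mem_filter]
        exact ⟨hcase i i.isLt, hρval i⟩
      have hcount : 1 ≤ ℓ.count (i : ℕ) := by
        rw [Nat.one_le_iff_ne_zero, ← Nat.pos_iff_ne_zero, List.count_pos_iff]
        have := (Finset.mem_filter.1 hmem).1
        rwa [hF, List.mem_toFinset] at this
      calc 1 ≤ ℓ.count (i : ℕ) := hcount
        _ ≤ eh i := Finset.single_le_sum (f := fun k => ℓ.count k)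
            (fun k _ => Nat.zero_le _) hmem
    have hNc : ℓ.length = c + (m + 1) := by
      have h3 : ∑ i : Fin (m + 1), eh i = ∑ i : Fin (m + 1), ((eh i - 1) + 1) :=
        Finset.sum_congr rfl (fun i _ => by have := hone i; omega)
      rw [← hsum, h3, Finset.sum_add_distrib, ← hc]
      simp
    have hlen' : m + 1 < ℓ.length := by rw [hℓ, length_toL]; exact hlen
    refine ⟨c, by omega, ?_⟩
    rw [mem_th_iff]
    intro T _ hM
    have hC : ∀ a b : T, a * b = b * a := comm_of_models hcm hM
    letI : CommSemigroup T := { (inferInstance : Semigroup T) with mul_comm := hC }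
    intro τ
    set P : T := lift τ w with hP
    rw [lift_spow, ← WithOne.coe_inj, coe_spow]
    set f : Fin (m + 1) → WithOne T := fun i => ((τ i.val : T) : WithOne T) with hf
    have hPf : ((P : T) : WithOne T) = ∏ i : Fin (m + 1), f i := by
      rw [hP, hw, coe_lift_xprod, Finset.prod_range]
    have key : ∀ r : Fin (m + 1),
        ((P : T) : WithOne T) = ((P : T) : WithOne T) * ∏ j : Fin (m + 1),
          f j ^ (eh (j - r) - 1) := by
      intro r
      have hid := hM _ hv (fun k => τ ((ρ k + r : Fin (m + 1)) : ℕ))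
      have hid' := congrArg (fun t : T => (t : WithOne T)) hid
      simp only at hid'
      rw [hw, coe_lift_xprod, coe_lift_count] at hid'
      have hL : (∏ j ∈ Finset.range (m + 1),
            ((τ ((ρ j + r : Fin (m + 1)) : ℕ) : T) : WithOne T)) = ((P : T) : WithOne T) := by
        rw [Finset.prod_range]
        have h4 : ∀ i : Fin (m + 1),
            ((τ ((ρ i.val + r : Fin (m + 1)) : ℕ) : T) : WithOne T) = f (i + r) := by
          intro i; rw [hρval i]
        rw [Fintype.prod_congr _ _ h4]
        have h5' := Equiv.prod_comp (Equiv.addRight r) f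
        simp only [Equiv.coe_addRight] at h5'
        rw [h5', hPf]
      have hR : (∏ k ∈ (toL v).toFinset,
            ((τ ((ρ k + r : Fin (m + 1)) : ℕ) : T) : WithOne T) ^ (toL v).count k) =
          ∏ j : Fin (m + 1), f (j + r) ^ eh j := by
        rw [← Finset.prod_fiberwise_of_maps_to (g := ρ) (t := Finset.univ)
          (fun k _ => Finset.mem_univ (ρ k))
          (fun k => ((τ ((ρ k + r : Fin (m + 1)) : ℕ) : T) : WithOne T) ^ (toL v).count k)]
        apply Finset.prod_congr rfl
        intro i _
        have h5 : ∀ k ∈ (toL v).toFinset.filter (fun k => ρ k = i),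
            ((τ ((ρ k + r : Fin (m + 1)) : ℕ) : T) : WithOne T) ^ (toL v).count k =
              f (i + r) ^ (toL v).count k := by
          intro k hk
          rw [(Finset.mem_filter.1 hk).2]
        rw [Finset.prod_congr rfl h5, Finset.prod_pow_eq_pow_sum, heh]
      rw [hL, hR] at hid'
      -- hid' : ↑P = ∏ j, f (j + r) ^ eh j ; reindex
      have h6 : (∏ j : Fin (m + 1), f (j + r) ^ eh j) =
          ∏ j : Fin (m + 1), f j ^ eh (j - r) := by
        rw [← Equiv.prod_comp (Equiv.addRight r) (fun j => f j ^ eh (j - r))]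
        apply Fintype.prod_congr
        intro i
        simp [add_sub_cancel_right]
      have h7 : (∏ j : Fin (m + 1), f j ^ eh (j - r)) =
          (∏ j : Fin (m + 1), f j ^ (eh (j - r) - 1)) * ∏ j : Fin (m + 1), f j := by
        rw [← Finset.prod_mul_distrib]
        apply Fintype.prod_congr
        intro j
        rw [← pow_succ, Nat.sub_add_cancel (hone _)]
      rw [h6, h7, ← hPf] at hid'
      rw [mul_comm] at hid'
      exact hid'
    have hchain := chain_mul _ _ key
    have h8 : (∏ r : Fin (m + 1), ∏ j : Fin (m + 1), f j ^ (eh (j - r) - 1)) =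
        ((P : T) : WithOne T) ^ c := by
      rw [Finset.prod_comm]
      have h9 : ∀ j : Fin (m + 1), (∏ r : Fin (m + 1), f j ^ (eh (j - r) - 1)) = f j ^ c := by
        intro j
        rw [Finset.prod_pow_eq_pow_sum, hc]
        congr 1
        exact Equiv.sum_comp (Equiv.subLeft j) (fun i => eh i - 1)
      rw [Fintype.prod_congr _ _ h9, Finset.prod_pow, ← hPf]
    rw [h8] at hchain
    rw [pow_succ']
    exact hchain
  · -- some letter j₀ < m+1 is missing from v
    push_neg at hcase
    obtain ⟨j₀, hj₀lt, hj₀⟩ := hcase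
    refine ⟨1, le_refl 1, ?_⟩
    rw [mem_th_iff]
    intro T _ hM
    have hC : ∀ a b : T, a * b = b * a := comm_of_models hcm hM
    letI : CommSemigroup T := { (inferInstance : Semigroup T) with mul_comm := hC }
    intro τ
    set P : T := lift τ w with hP
    rw [lift_spow, ← WithOne.coe_inj, coe_spow]
    have habs : ∀ b : T, ((P : T) : WithOne T) * (b : WithOne T) = ((P : T) : WithOne T) := by
      intro b
      set σ : ℕ → T := fun k => if k = j₀ then τ j₀ * b else τ k with hσ
      have h1 := congrArg (fun t : T => (t : WithOne T)) (hM _ hv τ)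
      have h2 := congrArg (fun t : T => (t : WithOne T)) (hM _ hv σ)
      simp only at h1 h2
      rw [hw, coe_lift_xprod, coe_lift_count] at h1 h2
      have hRHS : (∏ k ∈ (toL v).toFinset, ((σ k : T) : WithOne T) ^ (toL v).count k) =
          ∏ k ∈ (toL v).toFinset, ((τ k : T) : WithOne T) ^ (toL v).count k := by
        apply Finset.prod_congr rfl
        intro k hk
        have hne : k ≠ j₀ := fun hkj => hj₀ (by rw [hF, hℓ]; exact hkj ▸ hk)
        rw [hσ]; simp [hne]
      have hLHS : (∏ j ∈ Finset.range (m + 1), ((σ j : T) : WithOne T)) =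
          (∏ j ∈ Finset.range (m + 1), ((τ j : T) : WithOne T)) * (b : WithOne T) := by
        have h3 : ∀ j ∈ Finset.range (m + 1), ((σ j : T) : WithOne T) =
            ((τ j : T) : WithOne T) * (if j = j₀ then (b : WithOne T) else 1) := by
          intro j _
          rw [hσ]
          by_cases hj : j = j₀ <;> simp [hj, WithOne.coe_mul]
        rw [Finset.prod_congr rfl h3, Finset.prod_mul_distrib, Finset.prod_ite_eq',
          if_pos (Finset.mem_range.2 hj₀lt)]
      rw [hLHS, hRHS, ← h1] at h2
      have hPr : ((P : T) : WithOne T) = ∏ j ∈ Finset.range (m + 1), ((τ j : T) : WithOne T) := by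
        rw [hP, hw, coe_lift_xprod]
      rw [hPr]
      exact h2
    have := habs P
    rw [pow_two]
    exact this.symm
end LemA
section Final
open FreeSemigroup

lemma pow_iter {M : Type*} [Monoid M] (a : M) (e : ℕ) (h : a = a ^ (e + 1)) :
    ∀ k : ℕ, a = a ^ (k * e + 1) := by
  intro k
  induction k with
  | zero => simpa using rfl
  | succ k ih =>
      have : (k + 1) * e + 1 = (k * e + 1) + e := by ring
      rw [this, pow_add, ← ih, ← pow_succ']
      exact h

lemma th_spow_iter (V : SgVariety) {n c : ℕ}
    (h : (xprodTo n, spow (xprodTo n) c) ∈ V.th) (k : ℕ) :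
    (xprodTo n, spow (xprodTo n) (k * c)) ∈ V.th := by
  rw [mem_th_iff] at h ⊢
  intro S _ hM τ
  have h1 := h S hM τ
  rw [lift_spow] at h1 ⊢
  set P : S := lift τ (xprodTo n) with hP
  rw [← WithOne.coe_inj, coe_spow]
  have h2 : ((P : S) : WithOne S) = ((P : S) : WithOne S) ^ (c + 1) := by
    rw [← coe_spow, WithOne.coe_inj]
    exact h1
  exact pow_iter _ c h2 k

lemma satZero_of_spow {S : Type} [Semigroup S] (hnil : IsNilS S) {n e : ℕ} (he : 1 ≤ e)
    (hsat : SatS S (xprodTo n, spow (xprodTo n) e)) : SatZeroS S (xprodTo n) := by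
  obtain ⟨z, hz, hzp⟩ := hnil
  obtain ⟨e', rfl⟩ : ∃ e', e = e' + 1 := ⟨e - 1, by omega⟩
  intro σ a
  set P : S := lift σ (xprodTo n) with hP
  have hPe : ((P : S) : WithOne S) = ((P : S) : WithOne S) ^ (e' + 1 + 1) := by
    have h1 := hsat σ
    rw [lift_spow] at h1
    rw [← coe_spow, WithOne.coe_inj]
    exact h1
  obtain ⟨mm, hm⟩ := hzp P
  have hxp : ((P : S) : WithOne S) = ((P : S) : WithOne S) ^ ((mm + 1) * (e' + 1) + 1) :=
    pow_iter _ _ hPe (mm + 1)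
  have hexp : (mm + 1) * (e' + 1) + 1 = (mm + 1) + ((mm + 1) * e' + 1) := by ring
  have hPz : P = z := by
    rw [← WithOne.coe_inj]
    rw [hxp, hexp, pow_add, ← coe_spow, ← coe_spow, hm, ← WithOne.coe_mul,
      (hz (spow P ((mm + 1) * e'))).1]
  rw [hPz]
  exact hz a

lemma hasDegLe_mono (V : SgVariety) {m n : ℕ} (hm : 1 ≤ m) (hmn : m ≤ n)
    (hd : HasDegLe V m) : HasDegLe V n := by
  induction n, hmn using Nat.le_induction with
  | base => exact hd
  | succ t ht ih =>
      intro S _ hne hM hnil σ a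
      obtain ⟨t', rfl⟩ : ∃ t', t = t' + 1 := ⟨t - 1, by omega⟩
      have habs := ih S hne hM hnil σ
      have hxp : xprodTo (t' + 2) = xprodTo (t' + 1) * FreeSemigroup.of (t' + 1) := rfl
      have hval : lift σ (xprodTo (t' + 2)) = lift σ (xprodTo (t' + 1)) := by
        rw [hxp, map_mul, FreeSemigroup.lift_of]
        exact (habs (σ (t' + 1))).1
      rw [hval]
      exact habs a

lemma hasDegLe_left {X Y : ComVariety} {n : ℕ} (h : HasDegLe (X ⊔ Y).1 n) :
    HasDegLe X.1 n :=
  fun S _ hne hM hnil => h S hne (fun e he => hM e he.1) hnil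

lemma hasDegLe_right {X Y : ComVariety} {n : ℕ} (h : HasDegLe (X ⊔ Y).1 n) :
    HasDegLe Y.1 n :=
  fun S _ hne hM hnil => h S hne (fun e he => hM e he.2) hnil

lemma hasDegLe_join (X Y : ComVariety) {n : ℕ} (hn : 1 ≤ n)
    (hX : HasDegLe X.1 n) (hY : HasDegLe Y.1 n) : HasDegLe (X ⊔ Y).1 n := by
  obtain ⟨vX, hvX, hlX⟩ := exists_long X.1 n hn hX
  obtain ⟨cX, hcX1, hcX⟩ := exists_spow X.1 X.2 hn hvX hlX
  obtain ⟨vY, hvY, hlY⟩ := exists_long Y.1 n hn hY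
  obtain ⟨cY, hcY1, hcY⟩ := exists_spow Y.1 Y.2 hn hvY hlY
  have hXfull : (xprodTo n, spow (xprodTo n) (cX * cY)) ∈ X.1.th := by
    rw [mul_comm]
    exact th_spow_iter X.1 hcX cY
  have hYfull : (xprodTo n, spow (xprodTo n) (cX * cY)) ∈ Y.1.th :=
    th_spow_iter Y.1 hcY cX
  intro S _ hne hM hnil
  have hmem : (xprodTo n, spow (xprodTo n) (cX * cY)) ∈ (X ⊔ Y).1.th := ⟨hXfull, hYfull⟩
  exact satZero_of_spow hnil (Nat.one_le_iff_ne_zero.2 (by positivity)) (hM _ hmem)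

end Final
/-- For commutative semigroup varieties `X`, `Y`:
`deg(X ∨ Y) = max{deg X, deg Y}` (where `⊤ : ℕ∞` plays the role of `∞`). -/
theorem deg_of_join (X Y : ComVariety) (dX dY : ℕ∞)
    (hX : DegIs X.1 dX) (hY : DegIs Y.1 dY) :
    DegIs (X ⊔ Y).1 (max dX dY) := by
  rcases hX with ⟨nX, hnX, rfl, hLX⟩ | ⟨rfl, hTX⟩
  · rcases hY with ⟨nY, hnY, rfl, hLY⟩ | ⟨rfl, hTY⟩
    · -- both finite
      refine Or.inl ⟨max nX nY, by omega, ?_, ⟨by omega, ?_⟩, ?_⟩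
      · rcases le_total nX nY with h | h
        · rw [max_eq_right h, max_eq_right (by exact_mod_cast h : (nX : ℕ∞) ≤ (nY : ℕ∞))]
        · rw [max_eq_left h, max_eq_left (by exact_mod_cast h : (nY : ℕ∞) ≤ (nX : ℕ∞))]
      · exact hasDegLe_join X Y (by omega)
          (hasDegLe_mono X.1 hnX (le_max_left _ _) hLX.1.2)
          (hasDegLe_mono Y.1 hnY (le_max_right _ _) hLY.1.2)
      · rintro m ⟨h0m, hdm⟩
        exact max_le (hLX.2 ⟨h0m, hasDegLe_left hdm⟩) (hLY.2 ⟨h0m, hasDegLe_right hdm⟩)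
    · -- Y infinite
      refine Or.inr ⟨max_eq_right le_top, fun n hn hd => hTY n hn (hasDegLe_right hd)⟩
  · -- X infinite
    refine Or.inr ⟨max_eq_left le_top, fun n hn hd => hTX n hn (hasDegLe_left hd)⟩
end

section
/- If G is a periodic group variety and F is a combinatorial semigroup variety, then Gr(G ∨ F) = G. -/
/-!
Formalization framework: semigroup varieties as Galois-closed equational theories
over the free semigroup on countably many letters.  A variety is represented by
its equational theory; the order `V ≤ W` ("V is a subvariety of W") is reverse
inclusion of theories.  `Com` is the lattice of commutative semigroup varieties,
realized as the subtype of varieties whose theory contains the commutative law.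
-/

open FreeSemigroup

/-!
A combinatorial variety `F` satisfies `x^(c+1) = x^(c+2)` for some `c`. Otherwise either `F` has
no nontrivial one-variable identity, so all its identities are balanced and the infinite cyclic
group lies in `F`; or `F` satisfies `x^(m+1) = x^(m+q+1)` with `q > 0`, and then in every member of
`F` the powers `s^i`, `i > m`, of an element form a cyclic group, which must be trivial.

Let `H ≤ G ∨ F` be a group variety and `u = v` an identity of `G`, whose groups have exponent
dividing `k + 1`. In `G` the word `w = u v^(2k+1)` equals `v^(2k+2) = 1`, so `G` satisfies
`w^(c+1) = w^(c+2)`, and so does `F`. Hence `H` does, which forces `w = 1` in `H`; likewise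
`v^(2k+2) = 1` there, and cancelling `v^(2k+1)` gives `u = v` in `H`. Groups enter only through
cancellativity: an idempotent of a cancellative semigroup is its identity.
-/

section Spow

variable {M N : Type*} [Semigroup M] [Semigroup N]

theorem spow_add (a : M) (m n : ℕ) : spow a (m + n + 1) = spow a m * spow a n := by
  induction m with
  | zero => rw [Nat.zero_add]; rfl
  | succ m ih =>
    rw [show m + 1 + n + 1 = m + n + 1 + 1 by omega]
    exact (congrArg (a * ·) ih).trans (mul_assoc _ _ _).symm

theorem spow_mul_comm (a : M) (m n : ℕ) : spow a m * spow a n = spow a n * spow a m := by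
  rw [← spow_add, ← spow_add, Nat.add_comm m]

theorem spow_add_congr {a : M} {i j : ℕ} (h : spow a i = spow a j) (d : ℕ) :
    spow a (i + d) = spow a (j + d) := by
  induction d with
  | zero => exact h
  | succ d ih => exact congrArg (a * ·) ih

theorem map_spow (f : M →ₙ* N) (a : M) (n : ℕ) : f (spow a n) = spow (f a) n := by
  induction n with
  | zero => rfl
  | succ n ih => exact (map_mul f _ _).trans (congrArg (f a * ·) ih)

theorem IsIdempotentElem.spow_eq {a : M} (ha : IsIdempotentElem a) (n : ℕ) : spow a n = a := by
  induction n with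
  | zero => rfl
  | succ n ih => exact (congrArg (a * ·) ih).trans ha.eq

theorem isIdempotentElem_of_spow_eq_spow_succ [IsRightCancelMul M] {a : M} {c : ℕ}
    (h : spow a c = spow a (c + 1)) : IsIdempotentElem a := by
  have hfix : a * spow a c = spow a c := h.symm
  refine mul_right_cancel (b := spow a c) ?_
  rw [mul_assoc, hfix, hfix]

theorem isIdempotentElem_spow_of_spow_eq [IsLeftCancelMul M] {s : M} {n k : ℕ}
    (h : spow s n = spow s (n + k + 1)) : IsIdempotentElem (spow s k) := by
  have hfix : spow s n * spow s k = spow s n := by rw [← spow_add, ← h]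
  refine mul_left_cancel (a := spow s n) ?_
  rw [← mul_assoc, hfix, hfix]

theorem IsIdempotentElem.eq_of_isIdempotentElem [IsCancelMul M] {a b : M}
    (ha : IsIdempotentElem a) (hb : IsIdempotentElem b) : a = b := by
  have hab_left : a * b = b := mul_left_cancel (by rw [← mul_assoc, ha.eq])
  have hab_right : a * b = a := mul_right_cancel (by rw [mul_assoc, hb.eq])
  exact hab_right.symm.trans hab_left

end Spow

section GroupSemigroups

variable {S : Type} [Semigroup S]

theorem IsGroupS.isCancelMul (h : IsGroupS S) : IsCancelMul S := by
  obtain ⟨e, he, hinv⟩ := h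
  refine { mul_left_cancel := fun a b c hbc => ?_, mul_right_cancel := fun a b c hbc => ?_ }
  · obtain ⟨a', -, ha'⟩ := hinv a
    rw [← (he b).1, ← (he c).1, ← ha', mul_assoc, mul_assoc]
    exact congrArg (a' * ·) hbc
  · obtain ⟨a', ha', -⟩ := hinv a
    rw [← (he b).2, ← (he c).2, ← ha', ← mul_assoc, ← mul_assoc]
    exact congrArg (· * a') hbc

theorem isGroupS_of_group (G : Type) [Group G] : IsGroupS G :=
  ⟨1, fun a => ⟨one_mul a, mul_one a⟩, fun a => ⟨a⁻¹, mul_inv_cancel a, inv_mul_cancel a⟩⟩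

theorem IsGroupVariety.isCancelMul {V : SgVariety} (hV : IsGroupVariety V)
    (hS : Models S V.th) : IsCancelMul S := by
  rcases isEmpty_or_nonempty S with hS₀ | hS₀
  · exact { mul_left_cancel := isEmptyElim, mul_right_cancel := isEmptyElim }
  · exact (hV S hS₀ hS).isCancelMul

end GroupSemigroups

section Evaluation

theorem map_lift {M N : Type*} [Semigroup M] [Semigroup N] (f : M →ₙ* N) (σ : ℕ → M)
    (w : Word) : f (lift σ w) = lift (f ∘ σ) w :=
  (DFunLike.congr_fun (lift_comp_of' (f.comp (lift σ))) w).symm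

theorem lift_spow_xw {M : Type*} [Semigroup M] (σ : ℕ → M) (n : ℕ) :
    lift σ (spow xw n) = spow (σ 0) n :=
  map_spow _ _ _

theorem Models.subsemigroup {S : Type} [Semigroup S] {E : Set SgId} (hS : Models S E)
    (T : Subsemigroup S) : Models T E := fun e he σ =>
  Subtype.val_injective <| by
    have h := hS e he (MulMemClass.subtype T ∘ σ)
    rwa [← map_lift, ← map_lift] at h

namespace SgVariety

variable {V : SgVariety}

theorem mem_th_iff {e : SgId} :
    e ∈ V.th ↔ ∀ (S : Type) [Semigroup S], Models S V.th → SatS S e := by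
  conv_lhs => rw [← V.closed]
  rfl

theorem swap_mem_th {u v : Word} (h : (u, v) ∈ V.th) : (v, u) ∈ V.th :=
  mem_th_iff.2 fun _ _ hS σ => (hS _ h σ).symm

theorem subst_mem_th {u v : Word} (h : (u, v) ∈ V.th) (τ : ℕ → Word) :
    (lift τ u, lift τ v) ∈ V.th :=
  mem_th_iff.2 fun S _ hS σ => by
    simpa only [map_lift] using hS _ h (lift σ ∘ τ)

theorem spow_mem_th_of_isIdempotentElem {w : Word}
    (h : ∀ (S : Type) [Semigroup S], Models S V.th → ∀ σ : ℕ → S, IsIdempotentElem (lift σ w))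
    (i j : ℕ) : (spow w i, spow w j) ∈ V.th :=
  mem_th_iff.2 fun S _ hS σ => by
    simp only [map_spow, (h S hS σ).spow_eq]

end SgVariety

end Evaluation

section Content

def content (w : Word) : Multiset ℕ := ↑(w.head :: w.tail)

theorem content_of (i : ℕ) : content (of i) = {i} := rfl

theorem content_mul (u v : Word) : content (u * v) = content u + content v := by
  simp only [content, Multiset.coe_add, List.cons_append]; rfl

theorem lift_eq_prod_content {M : Type*} [CommMonoid M] (σ : ℕ → M) (w : Word) :
    lift σ w = ((content w).map σ).prod := by
  induction w using FreeSemigroup.recOnMul with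
  | ih1 i => simp [content_of]
  | ih2 i w _ ih =>
    rw [map_mul, ih, content_mul, Multiset.map_add, Multiset.prod_add]
    simp [content_of]

theorem lift_comp_spow_xw (φ : Multiset ℕ →+ ℕ) (w : Word) :
    lift (fun j => spow xw (φ {j})) w = spow xw (φ (content w) + w.length - 1) := by
  induction w using FreeSemigroup.recOnMul with
  | ih1 i => simp [content_of]
  | ih2 i w _ ih =>
    have hw : 1 ≤ w.length := Nat.le_add_left _ _
    rw [map_mul, ih, lift_of, ← spow_add, content_mul, length_mul]
    congr 1
    rw [map_add, content_of, length_of]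
    omega

theorem content_eq_of_mem_th {V : SgVariety}
    (hV : ∀ a b, (spow xw a, spow xw b) ∈ V.th → a = b) {u v : Word} (h : (u, v) ∈ V.th) :
    content u = content v := by
  have hweight (φ : Multiset ℕ →+ ℕ) : φ (content u) + u.length = φ (content v) + v.length := by
    have := hV _ _ <| by
      simpa only [lift_comp_spow_xw] using V.subst_mem_th h fun j => spow xw (φ {j})
    have hu : 1 ≤ u.length := Nat.le_add_left _ _
    have hv : 1 ≤ v.length := Nat.le_add_left _ _
    omega
  ext i
  have h₀ := hweight 0
  have h₁ := hweight (Multiset.countAddMonoidHom i)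
  simp only [AddMonoidHom.zero_apply, Multiset.coe_countAddMonoidHom] at h₀ h₁
  omega

theorem models_of_commMonoid {V : SgVariety}
    (hV : ∀ a b, (spow xw a, spow xw b) ∈ V.th → a = b) (M : Type) [CommMonoid M] :
    Models M V.th := fun _ he σ => by
  rw [lift_eq_prod_content, lift_eq_prod_content, content_eq_of_mem_th hV he]

end Content

section Tail

variable {S : Type} [Semigroup S]

def tailSubsemigroup (s : S) (m : ℕ) : Subsemigroup S where
  carrier := {x | ∃ i, m ≤ i ∧ spow s i = x}
  mul_mem' := by
    rintro _ _ ⟨i, hi, rfl⟩ ⟨j, -, rfl⟩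
    exact ⟨i + j + 1, by omega, spow_add s i j⟩

variable {s : S} {m q : ℕ}

theorem exists_period_ge (h : spow s m = spow s (m + q)) (hq : 0 < q) (N : ℕ) :
    ∃ P, N ≤ P ∧ ∀ i, m ≤ i → spow s (i + P) = spow s i := by
  have hstep (i : ℕ) (hi : m ≤ i) : spow s (i + q) = spow s i := by
    have := spow_add_congr h (i - m)
    rwa [Nat.add_sub_cancel' hi, Nat.add_right_comm, Nat.add_sub_cancel' hi, eq_comm] at this
  refine ⟨N * q, Nat.le_mul_of_pos_right N hq, fun i hi => ?_⟩
  induction N with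
  | zero => rw [Nat.zero_mul, Nat.add_zero]
  | succ N ih => rw [Nat.succ_mul, ← Nat.add_assoc, hstep _ (by omega), ih]

theorem isGroupS_tailSubsemigroup (h : spow s m = spow s (m + q)) (hq : 0 < q) :
    IsGroupS (tailSubsemigroup s m) := by
  obtain ⟨P, hP, hPer⟩ := exists_period_ge h hq (m + 1)
  have hid (i : ℕ) (hi : m ≤ i) : spow s (P - 1) * spow s i = spow s i := by
    rw [← spow_add, show P - 1 + i + 1 = i + P by omega, hPer i hi]
  refine ⟨⟨spow s (P - 1), P - 1, by omega, rfl⟩, ?_, ?_⟩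
  · rintro ⟨_, i, hi, rfl⟩
    exact ⟨Subtype.ext (hid i hi), Subtype.ext ((spow_mul_comm _ _ _).trans (hid i hi))⟩
  · rintro ⟨_, i, hi, rfl⟩
    obtain ⟨Q, hQ, hQer⟩ := exists_period_ge h hq (i + 1)
    have hinv : spow s i * spow s (P - 1 + Q - (i + 1)) = spow s (P - 1) := by
      rw [← spow_add, show i + (P - 1 + Q - (i + 1)) + 1 = P - 1 + Q by omega, hQer _ (by omega)]
    exact ⟨⟨_, _, by omega, rfl⟩, Subtype.ext hinv,
      Subtype.ext ((spow_mul_comm _ _ _).trans hinv)⟩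

end Tail

namespace IsCombinatorial

variable {F : SgVariety}

theorem spow_eq_spow_succ (hF : IsCombinatorial F) {S : Type} [Semigroup S]
    (hS : Models S F.th) {s : S} {m q : ℕ} (h : spow s m = spow s (m + q)) (hq : 0 < q) :
    spow s m = spow s (m + 1) :=
  have := hF _ (hS.subsemigroup _) (isGroupS_tailSubsemigroup h hq)
  congrArg Subtype.val (Subsingleton.elim (α := tailSubsemigroup s m)
    ⟨spow s m, m, le_rfl, rfl⟩ ⟨spow s (m + 1), m + 1, by omega, rfl⟩)

theorem exists_spow_mem_th (hF : IsCombinatorial F) :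
    ∃ c, (spow xw c, spow xw (c + 1)) ∈ F.th := by
  by_cases hinj : ∀ a b, (spow xw a, spow xw b) ∈ F.th → a = b
  · have := hF _ (models_of_commMonoid hinj (Multiplicative ℤ))
      (isGroupS_of_group (Multiplicative ℤ))
    exact (not_subsingleton _ this).elim
  push Not at hinj
  obtain ⟨a, b, hab, hne⟩ := hinj
  wlog hlt : a < b generalizing a b
  · exact this b a (F.swap_mem_th hab) hne.symm (by omega)
  refine ⟨a, F.mem_th_iff.2 fun S _ hS σ => ?_⟩
  have hper : spow (σ 0) a = spow (σ 0) (a + (b - a)) := by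
    rw [Nat.add_sub_cancel' hlt.le, ← lift_spow_xw, ← lift_spow_xw]
    exact hS _ hab σ
  simpa only [lift_spow_xw] using hF.spow_eq_spow_succ hS hper (by omega)

end IsCombinatorial

theorem IsGroupVariety.isIdempotentElem_lift_mul_spow {G : SgVariety} (hG : IsGroupVariety G)
    {n k : ℕ} (hper : (spow xw n, spow xw (n + k + 1)) ∈ G.th) {u v : Word} (huv : (u, v) ∈ G.th)
    {S : Type} [Semigroup S] (hS : Models S G.th) (σ : ℕ → S) :
    IsIdempotentElem (lift σ (u * spow v (2 * k))) := by
  have := hG.isCancelMul hS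
  have hexp : IsIdempotentElem (spow (lift σ v) k) :=
    isIdempotentElem_spow_of_spow_eq <| by
      simpa only [lift_spow_xw] using hS _ hper fun _ => lift σ v
  have hval : lift σ (u * spow v (2 * k)) = spow (lift σ v) k * spow (lift σ v) k := by
    rw [map_mul, hS _ huv σ, map_spow, ← spow_add, two_mul]
    rfl
  rw [hval, hexp.eq]
  exact hexp

theorem isIdempotentElem_lift_of_le_sup {G F H : SgVariety} (hH : IsGroupVariety H)
    (hle : H ≤ G ⊔ F) {c : ℕ} (hc : (spow xw c, spow xw (c + 1)) ∈ F.th) {w : Word}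
    (hw : ∀ (S : Type) [Semigroup S], Models S G.th → ∀ σ : ℕ → S, IsIdempotentElem (lift σ w))
    {S : Type} [Semigroup S] (hS : Models S H.th) (σ : ℕ → S) : IsIdempotentElem (lift σ w) := by
  have := hH.isCancelMul hS
  have hwc : (spow w c, spow w (c + 1)) ∈ H.th :=
    hle ⟨G.spow_mem_th_of_isIdempotentElem hw c (c + 1),
      by simpa only [lift_spow_xw] using F.subst_mem_th hc fun _ => w⟩
  exact isIdempotentElem_of_spow_eq_spow_succ (by simpa only [map_spow] using hS _ hwc σ)

/-- If `G` is a periodic group variety and `F` is a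
combinatorial semigroup variety, then `Gr(G ∨ F) = G`, i.e. `G` is the
greatest group subvariety of `G ∨ F`. -/
theorem Gr_of_join_eq (G F : SgVariety) (hG : IsGroupVariety G)
    (hGper : IsPeriodic G) (hF : IsCombinatorial F) :
    IsGreatest {H : SgVariety | IsGroupVariety H ∧ H ≤ G ⊔ F} G := by
  refine ⟨⟨hG, le_sup_left⟩, fun H ⟨hH, hle⟩ e he => ?_⟩
  obtain ⟨n, k, hper⟩ := hGper
  obtain ⟨c, hc⟩ := hF.exists_spow_mem_th
  refine H.mem_th_iff.2 fun S _ hS σ => ?_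
  have := hH.isCancelMul hS
  have hidem (u : Word) (hu : (u, e.2) ∈ G.th) :
      IsIdempotentElem (lift σ (u * spow e.2 (2 * k))) :=
    isIdempotentElem_lift_of_le_sup hH hle hc
      (fun _ _ hT => hG.isIdempotentElem_lift_mul_spow hper hu hT) hS σ
  have heq := (hidem e.1 he).eq_of_isIdempotentElem
    (hidem e.2 (G.mem_th_iff.2 fun _ _ _ _ => rfl))
  rw [map_mul, map_mul] at heq
  exact mul_right_cancel heq
end
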